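/- Let f₁ = ![X, Z, Z, X, 1], f₂ = ![1, X, Z, Z, X], f₃ = ![X, 1, X, Z, Z], f₄ = ![Z, X, 1, X, Z] be the Pauli strings of the five-qubit code stabilizers, and let S i = PiTensorProduct.map (fun k => Matrix.toLin' (f i k)) be the induced endomorphisms of T = ⨂[ℂ] (k : Fin 5), ℂ². Then for every subset G of Fin 5 with G ≠ ∅ and G ≠ univ, there do not exist nonzero vectors u ∈ ⨂[ℂ] (k : G), ℂ² and v ∈ ⨂[ℂ] (k : Gᶜ), ℂ² such that S i (e_G (u ⊗ₜ v)) = e_G (u ⊗ₜ v) for all i ∈ Fin 4. In other words, the five-qubit code subspace C₅ (the common fixed subspace of S₁,…,S₄) contains only genuinely multipartite entangled states. -/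

import Mathlib

/-!
If `e_G (u ⊗ v)` is fixed by every stabilizer, then, since each stabilizer acts factorwise,
`u` and `v` are eigenvectors with nonzero eigenvalues of every stabilizer restricted to `G`,
resp. `Gᶜ`. One of the two sides has at most two qubits, and on every nonempty set of at most
two qubits some pair of stabilizers has anticommuting Pauli factors at an odd number of
positions, so their restrictions anticommute. An eigenvector with nonzero eigenvalues of two
anticommuting operators is zero.
-/

open scoped TensorProduct Classical

namespace FiveQubitCode

/-- The Pauli matrix X. -/
def X : Matrix (Fin 2) (Fin 2) ℂ := !![0, 1; 1, 0]

/-- The Pauli matrix Z. -/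
def Z : Matrix (Fin 2) (Fin 2) ℂ := !![1, 0; 0, -1]

/-- The Pauli strings of the four stabilizers of the five-qubit code. -/
def f : Fin 4 → Fin 5 → Matrix (Fin 2) (Fin 2) ℂ :=
  ![![X, Z, Z, X, 1], ![1, X, Z, Z, X], ![X, 1, X, Z, Z], ![Z, X, 1, X, Z]]

/-- The stabilizers of the five-qubit code as endomorphisms of `⨂_{k : Fin 5} ℂ²`. -/
noncomputable def S (i : Fin 4) :
    (⨂[ℂ] _ : Fin 5, (Fin 2 → ℂ)) →ₗ[ℂ] ⨂[ℂ] _ : Fin 5, (Fin 2 → ℂ) :=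
  PiTensorProduct.map fun k => Matrix.toLin' (f i k)

end FiveQubitCode

namespace PiTensorProduct

variable {R ι : Type*} [CommSemiring R] [Fintype ι] {M N : ι → Type*}
  [∀ i, AddCommMonoid (M i)] [∀ i, Module R (M i)] [∀ i, AddCommMonoid (N i)] [∀ i, Module R (N i)]

theorem map_smul_univ (c : ι → R) (F : Π i, M i →ₗ[R] N i) :
    map (fun i => c i • F i) = (∏ i, c i) • map F := by
  ext m
  simp [map_tprod, MultilinearMap.map_smul_univ]

theorem map_mul_map_eq_smul {F G : Π i, Module.End R (M i)} (ε : ι → R)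
    (h : ∀ i, F i * G i = ε i • (G i * F i)) :
    map F * map G = (∏ i, ε i) • (map G * map F) := by
  rw [← PiTensorProduct.map_mul, ← PiTensorProduct.map_mul, ← map_smul_univ]
  exact congrArg map (funext h)

end PiTensorProduct

theorem Module.End.eq_zero_of_mul_eq_neg_of_apply_eq_smul {K V : Type*} [Field K] [CharZero K]
    [AddCommGroup V] [Module K V] {A B : Module.End K V} (hAB : A * B = -(B * A)) {u : V}
    {a b : K} (ha : a ≠ 0) (hb : b ≠ 0) (hAu : A u = a • u) (hBu : B u = b • u) : u = 0 := by
  have h : (a * b) • u = -((a * b) • u) := by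
    simpa [hAu, hBu, smul_smul, mul_comm] using LinearMap.congr_fun hAB u
  have h2 : (2 * (a * b)) • u = 0 := by
    rw [mul_smul, two_smul, eq_neg_iff_add_eq_zero.mp h]
  exact (smul_eq_zero.mp h2).resolve_left (mul_ne_zero two_ne_zero (mul_ne_zero ha hb))

namespace TensorProduct

variable {K V W : Type*} [Field K] [AddCommGroup V] [Module K V] [AddCommGroup W] [Module K W]

theorem exists_smul_eq_left_of_tmul_eq {x u : V} {y v : W} (h : x ⊗ₜ[K] y = u ⊗ₜ[K] v)
    (hu : u ≠ 0) (hv : v ≠ 0) : ∃ c : K, c ≠ 0 ∧ x = c • u := by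
  obtain ⟨ψ, hψ⟩ := Module.Projective.exists_dual_eq_one K hv
  have key := congrArg (fun w => TensorProduct.rid K V (ψ.lTensor V w)) h
  simp only [LinearMap.lTensor_tmul, rid_tmul, hψ, one_smul] at key
  have hψy : ψ y ≠ 0 := by
    rintro hψy
    exact hu (by simpa [hψy] using key.symm)
  exact ⟨(ψ y)⁻¹, inv_ne_zero hψy, by rw [← key, smul_smul, inv_mul_cancel₀ hψy, one_smul]⟩

theorem exists_smul_eq_right_of_tmul_eq {x u : V} {y v : W} (h : x ⊗ₜ[K] y = u ⊗ₜ[K] v)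
    (hu : u ≠ 0) (hv : v ≠ 0) : ∃ c : K, c ≠ 0 ∧ y = c • v :=
  exists_smul_eq_left_of_tmul_eq (by simpa using congrArg (TensorProduct.comm K V W) h) hv hu

end TensorProduct

namespace FiveQubitCode

noncomputable def stabilizerOn (s : Set (Fin 5)) (i : Fin 4) :
    Module.End ℂ (⨂[ℂ] _ : s, (Fin 2 → ℂ)) :=
  PiTensorProduct.map fun k : s => Matrix.toLin' (f i k)

theorem S_apply_tmul {G : Set (Fin 5)}
    {eG : ((⨂[ℂ] _ : G, (Fin 2 → ℂ)) ⊗[ℂ] (⨂[ℂ] _ : (Gᶜ : Set (Fin 5)), (Fin 2 → ℂ)))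
      ≃ₗ[ℂ] ⨂[ℂ] _ : Fin 5, (Fin 2 → ℂ)}
    (heG : ∀ (a : G → Fin 2 → ℂ) (b : (Gᶜ : Set (Fin 5)) → Fin 2 → ℂ),
      eG (PiTensorProduct.tprod ℂ a ⊗ₜ[ℂ] PiTensorProduct.tprod ℂ b) =
        PiTensorProduct.tprod ℂ fun k : Fin 5 => if h : k ∈ G then a ⟨k, h⟩ else b ⟨k, h⟩)
    (i : Fin 4) (x : ⨂[ℂ] _ : G, (Fin 2 → ℂ)) (y : ⨂[ℂ] _ : (Gᶜ : Set (Fin 5)), (Fin 2 → ℂ)) :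
    S i (eG (x ⊗ₜ y)) = eG (stabilizerOn G i x ⊗ₜ stabilizerOn Gᶜ i y) := by
  suffices (S i).comp eG.toLinearMap =
      eG.toLinearMap.comp (TensorProduct.map (stabilizerOn G i) (stabilizerOn Gᶜ i)) from
    LinearMap.congr_fun this (x ⊗ₜ y)
  refine TensorProduct.ext (PiTensorProduct.ext (MultilinearMap.ext fun a => ?_))
  refine PiTensorProduct.ext (MultilinearMap.ext fun b => ?_)
  simp only [S, stabilizerOn, LinearMap.compMultilinearMap_apply, LinearMap.compr₂ₛₗ_apply,
    TensorProduct.mk_apply, LinearMap.coe_comp, LinearEquiv.coe_coe, Function.comp_apply,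
    TensorProduct.map_tmul, PiTensorProduct.map_tprod, heG]
  congr 1
  funext k
  by_cases hk : k ∈ G <;> simp [hk]

-- Pauli strings are encoded over `Fin 3` (`0, 1, 2` for `1, X, Z`) so that the pattern of
-- anticommuting positions becomes decidable.
def pauli : Fin 3 → Matrix (Fin 2) (Fin 2) ℂ := ![1, X, Z]

def pauliCode : Fin 4 → Fin 5 → Fin 3 :=
  ![![1, 2, 2, 1, 0], ![0, 1, 2, 2, 1], ![1, 0, 1, 2, 2], ![2, 1, 0, 1, 2]]

def PauliAnticommute (a b : Fin 3) : Prop := a = 1 ∧ b = 2 ∨ a = 2 ∧ b = 1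

instance : DecidableRel PauliAnticommute := fun _ _ => by unfold PauliAnticommute; infer_instance

theorem f_eq_pauli (i : Fin 4) (k : Fin 5) : f i k = pauli (pauliCode i k) := by
  fin_cases i <;> fin_cases k <;> rfl

theorem pauli_mul_pauli (a b : Fin 3) :
    pauli a * pauli b = (if PauliAnticommute a b then -1 else 1 : ℂ) • (pauli b * pauli a) := by
  fin_cases a <;> fin_cases b <;> simp [pauli, PauliAnticommute, X, Z]

open Finset in
theorem exists_odd_card_anticommute (T : Finset (Fin 5)) (hT : T.Nonempty) (hcard : T.card ≤ 2) :
    ∃ i j, Odd #{k ∈ T | PauliAnticommute (pauliCode i k) (pauliCode j k)} := by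
  revert T; decide

theorem exists_stabilizerOn_mul_eq_neg {s : Set (Fin 5)} (hs : s.Nonempty) (hcard : s.ncard ≤ 2) :
    ∃ i j, stabilizerOn s i * stabilizerOn s j = -(stabilizerOn s j * stabilizerOn s i) := by
  obtain ⟨i, j, hodd⟩ := exists_odd_card_anticommute s.toFinset (by simpa using hs)
    (by rwa [Set.ncard_eq_toFinset_card'] at hcard)
  let ε : Fin 5 → ℂ := fun k => if PauliAnticommute (pauliCode i k) (pauliCode j k) then -1 else 1
  have hmul (k : s) : Matrix.toLin' (f i k) * Matrix.toLin' (f j k) =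
      ε k • (Matrix.toLin' (f j k) * Matrix.toLin' (f i k)) := by
    rw [Module.End.mul_eq_comp, Module.End.mul_eq_comp, ← Matrix.toLin'_mul, ← Matrix.toLin'_mul,
      f_eq_pauli, f_eq_pauli, pauli_mul_pauli, map_smul]
  have hprod : ∏ k : s, ε k = -1 := by
    rw [Finset.prod_set_coe, Finset.prod_ite, Finset.prod_const, Finset.prod_const_one, mul_one,
      hodd.neg_one_pow]
  refine ⟨i, j, ?_⟩
  rw [stabilizerOn, stabilizerOn, PiTensorProduct.map_mul_map_eq_smul _ hmul, hprod]
  exact neg_one_smul ℂ (_ : Module.End ℂ (⨂[ℂ] _ : s, (Fin 2 → ℂ)))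

theorem eq_zero_of_forall_stabilizerOn_apply_eq_smul {s : Set (Fin 5)} (hs : s.Nonempty)
    (hcard : s.ncard ≤ 2) {w : ⨂[ℂ] _ : s, (Fin 2 → ℂ)}
    (hw : ∀ i, ∃ c : ℂ, c ≠ 0 ∧ stabilizerOn s i w = c • w) : w = 0 := by
  obtain ⟨i, j, hij⟩ := exists_stabilizerOn_mul_eq_neg hs hcard
  obtain ⟨a, ha, hai⟩ := hw i
  obtain ⟨b, hb, hbj⟩ := hw j
  exact Module.End.eq_zero_of_mul_eq_neg_of_apply_eq_smul hij ha hb hai hbj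

/-- the five-qubit code subspace (the common fixed subspace of the four
stabilizers) contains only genuinely multipartite entangled states: for every nontrivial
bipartition `G|Gᶜ` of the five qubits, no vector of the form `e_G (u ⊗ v)` with `u, v ≠ 0`
is fixed by all the stabilizers. -/
theorem five_qubit_code_genuinely_entangled :
    ∀ G : Set (Fin 5), G ≠ ∅ → G ≠ Set.univ →
      ∀ eG : ((⨂[ℂ] _ : G, (Fin 2 → ℂ)) ⊗[ℂ] (⨂[ℂ] _ : (Gᶜ : Set (Fin 5)), (Fin 2 → ℂ)))
          ≃ₗ[ℂ] ⨂[ℂ] _ : Fin 5, (Fin 2 → ℂ),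
        (∀ (a : G → Fin 2 → ℂ) (b : (Gᶜ : Set (Fin 5)) → Fin 2 → ℂ),
          eG (PiTensorProduct.tprod ℂ a ⊗ₜ[ℂ] PiTensorProduct.tprod ℂ b) =
            PiTensorProduct.tprod ℂ fun k : Fin 5 =>
              if h : k ∈ G then a ⟨k, h⟩ else b ⟨k, h⟩) →
        ¬∃ (u : ⨂[ℂ] _ : G, (Fin 2 → ℂ)) (v : ⨂[ℂ] _ : (Gᶜ : Set (Fin 5)), (Fin 2 → ℂ)),
            u ≠ 0 ∧ v ≠ 0 ∧ ∀ i : Fin 4, S i (eG (u ⊗ₜ[ℂ] v)) = eG (u ⊗ₜ[ℂ] v) := by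
  rintro G hG hGu eG heG ⟨u, v, hu, hv, hfix⟩
  have hfactor (i : Fin 4) : stabilizerOn G i u ⊗ₜ stabilizerOn Gᶜ i v = u ⊗ₜ[ℂ] v :=
    eG.injective (by rw [← S_apply_tmul heG]; exact hfix i)
  have hcard : G.ncard + Gᶜ.ncard = 5 := by simpa using Set.ncard_add_ncard_compl G
  by_cases hG2 : G.ncard ≤ 2
  · exact hu <| eq_zero_of_forall_stabilizerOn_apply_eq_smul (Set.nonempty_iff_ne_empty.mpr hG)
      hG2 fun i => TensorProduct.exists_smul_eq_left_of_tmul_eq (hfactor i) hu hv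
  · exact hv <| eq_zero_of_forall_stabilizerOn_apply_eq_smul (Set.nonempty_compl.mpr hGu)
      (by omega) fun i => TensorProduct.exists_smul_eq_right_of_tmul_eq (hfactor i) hu hv

end FiveQubitCode
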